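/- Let f : T → S be a rigid surjection between ordered trees, let x ∈ ℓ(S), and let y ∈ ℓ(T) be f-conjugate to x (i.e., i-conjugate to x where i is the injection of f). Then f[T^y] = S^x, and f_x := f↾T^y is a rigid surjection from T^y onto S^x. -/

import Mathlib

/-- An ordered tree: a finite poset (`tle`, the tree order `⊑`) with a root,
linearly ordered predecessor sets, binary meets, together with a linear order
`lin` (the lexicographic order `≤`) extending the tree order and coherent with
the tree structure (determined on subtrees above incomparable vertices). -/
structure OTree (α : Type) [Finite α] where
  tle : α → α → Prop
  tle_refl : ∀ v, tle v v
  tle_trans : ∀ u v w, tle u v → tle v w → tle u w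
  tle_antisymm : ∀ v w, tle v w → tle w v → v = w
  root : α
  root_le : ∀ v, tle root v
  pred_chain : ∀ v x y, tle x v → tle y v → tle x y ∨ tle y x
  meet : α → α → α
  meet_le_left : ∀ v w, tle (meet v w) v
  meet_le_right : ∀ v w, tle (meet v w) w
  le_meet : ∀ x v w, tle x v → tle x w → tle x (meet v w)
  lin : α → α → Prop
  lin_refl : ∀ v, lin v v
  lin_trans : ∀ u v w, lin u v → lin v w → lin u w
  lin_antisymm : ∀ v w, lin v w → lin w v → v = w
  lin_total : ∀ v w, lin v w ∨ lin w v
  tle_lin : ∀ v w, tle v w → lin v w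
  lex_coh : ∀ v w v' w', tle v v' → tle w w' → ¬ tle v w → ¬ tle w v → (lin v' w' ↔ lin v w)

variable {α β γ : Type} [Finite α] [Finite β] [Finite γ]

/-- A morphism of ordered trees: preserves meets, the lexicographic order, and the root. -/
def IsMorphism (S : OTree α) (T : OTree β) (e : α → β) : Prop :=
  (∀ v w, e (S.meet v w) = T.meet (e v) (e w)) ∧
  (∀ v w, S.lin v w → T.lin (e v) (e w)) ∧
  e S.root = T.root

/-- An embedding is an injective morphism. -/
def IsEmbedding (S : OTree α) (T : OTree β) (e : α → β) : Prop :=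
  IsMorphism S T e ∧ Function.Injective e

/-- `e` witnesses that `f : T → S` is a rigid surjection: `e` is a morphism with
`f ∘ e = id_S` and `e ∘ f ⊑_T id_T` pointwise.  Such `e` is called the injection of `f`. -/
def IsInjectionOf (T : OTree β) (S : OTree α) (f : β → α) (e : α → β) : Prop :=
  IsMorphism S T e ∧ (∀ v, f (e v) = v) ∧ (∀ w, T.tle (e (f w)) w)

/-- `f : T → S` is a rigid surjection. -/
def IsRigidSurj (T : OTree β) (S : OTree α) (f : β → α) : Prop :=
  ∃ e, IsInjectionOf T S f e

/-- `e` maps the `≤_S`-largest vertex (= largest leaf) of `S` to the `≤_T`-largest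
vertex of `T`. -/
def IsSealedInj (T : OTree β) (S : OTree α) (e : α → β) : Prop :=
  ∀ s t, (∀ v, S.lin v s) → (∀ w, T.lin w t) → e s = t

/-- A sealed rigid surjection. -/
def IsSealedRS (T : OTree β) (S : OTree α) (f : β → α) : Prop :=
  ∃ e, IsInjectionOf T S f e ∧ IsSealedInj T S e

/-- The initial subtree `T^v = {w : w ≤_T v}`. -/
def OTree.initSeg (T : OTree β) (v : β) : Set β := {w | T.lin w v}

/-- Restriction of an ordered tree to a nonempty `⊑`-downward closed subset. -/
def OTree.restrict (T : OTree β) (T' : Set β) (hne : T'.Nonempty)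
    (hdc : ∀ v w, T.tle v w → w ∈ T' → v ∈ T') : OTree T' where
  tle v w := T.tle v.1 w.1
  tle_refl v := T.tle_refl v.1
  tle_trans u v w h1 h2 := T.tle_trans u.1 v.1 w.1 h1 h2
  tle_antisymm v w h1 h2 := Subtype.ext (T.tle_antisymm v.1 w.1 h1 h2)
  root := ⟨T.root, hdc T.root hne.some (T.root_le hne.some) hne.some_mem⟩
  root_le v := T.root_le v.1
  pred_chain v x y h1 h2 := T.pred_chain v.1 x.1 y.1 h1 h2
  meet v w := ⟨T.meet v.1 w.1, hdc (T.meet v.1 w.1) v.1 (T.meet_le_left v.1 w.1) v.2⟩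
  meet_le_left v w := T.meet_le_left v.1 w.1
  meet_le_right v w := T.meet_le_right v.1 w.1
  le_meet x v w h1 h2 := T.le_meet x.1 v.1 w.1 h1 h2
  lin v w := T.lin v.1 w.1
  lin_refl v := T.lin_refl v.1
  lin_trans u v w h1 h2 := T.lin_trans u.1 v.1 w.1 h1 h2
  lin_antisymm v w h1 h2 := Subtype.ext (T.lin_antisymm v.1 w.1 h1 h2)
  lin_total v w := T.lin_total v.1 w.1
  tle_lin v w h := T.tle_lin v.1 w.1 h
  lex_coh v w v' w' h1 h2 h3 h4 := T.lex_coh v.1 w.1 v'.1 w'.1 h1 h2 h3 h4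

/-- The initial subtree `T^v` as an ordered tree. -/
def OTree.init (T : OTree β) (v : β) : OTree (T.initSeg v) :=
  T.restrict (T.initSeg v) ⟨v, T.lin_refl v⟩
    (fun a b hab hb => T.lin_trans a b v (T.tle_lin a b hab) hb)

/-- A leaf: a `⊑`-maximal vertex. -/
def OTree.Leaf (T : OTree β) (y : β) : Prop := ∀ w, T.tle y w → w = y

/-- Strict lexicographic order. -/
def linLt (T : OTree β) (v w : β) : Prop := T.lin v w ∧ v ≠ w

/-- `y` is `i`-conjugate to `x` (for leaves `x` of `S`, `y` of `T`). -/
def Conj (S : OTree α) (T : OTree β) (i : α → β) (x : α) (y : β) : Prop :=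
  S.Leaf x ∧ T.Leaf y ∧
  (((∀ z, S.Leaf z → S.lin z x) ∧ (∀ z, T.Leaf z → T.lin z y)) ∨
   (∃ x', S.Leaf x' ∧ linLt S x x' ∧ (∀ z, S.Leaf z → linLt S x z → S.lin x' z) ∧
      linLt T y (i x') ∧ T.meet (i x) (i x') = T.meet y (i x') ∧
      (∀ z, T.Leaf z → linLt T z (i x') → T.meet (i x) (i x') = T.meet z (i x') → T.lin z y)))


/-!
The heart of the matter is that the injection `i` of `f` identifies `S^x` with the
vertices of `S` that `i` sends into `T^y`: `v ≤_S x ↔ i v ≤_T y`.  Given this, `w ≤_T y`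
gives `i (f w) ⊑_T w ≤_T y`, hence `f w ≤_S x`, and `i` restricts to an injection of
`f ↾ T^y`.

If `x` is the largest leaf, both sides of the equivalence always hold.  Otherwise let `x'`
be the next leaf.  Every `v` strictly between `x` and `x'` lies below `x'` in the tree order
and strictly above `x ∧ x'`, so `i v` is incomparable with `y`, and the lexicographic order
compares `i v` with `y` exactly as `i x'` is compared with `y`, i.e. `i v >_T y`.
-/

namespace OTree

variable (T : OTree β)

lemma tle_iff_meet_eq {a b : β} : T.tle a b ↔ T.meet a b = a :=
  ⟨fun h => T.tle_antisymm _ _ (T.meet_le_left a b) (T.le_meet a a b (T.tle_refl a) h),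
    fun h => h ▸ T.meet_le_right a b⟩

lemma exists_leaf_tle (v : β) : ∃ z, T.Leaf z ∧ T.tle v z := by
  let _ : PartialOrder β :=
    { le := T.lin, le_refl := T.lin_refl, le_trans := T.lin_trans,
      le_antisymm := T.lin_antisymm }
  obtain ⟨z, hz⟩ := (Set.toFinite {w | T.tle v w}).exists_maximal ⟨v, T.tle_refl v⟩
  exact ⟨z, fun w hw => (hz.eq_of_le (T.tle_trans _ _ _ hz.prop hw) (T.tle_lin _ _ hw)).symm,
    hz.prop⟩

lemma meet_eq_meet_of_tle {a b z : β} (haz : T.tle a z) (hab : ¬ T.tle a b) :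
    T.meet a b = T.meet z b := by
  refine T.tle_antisymm _ _
    (T.le_meet _ _ _ (T.tle_trans _ _ _ (T.meet_le_left _ _) haz) (T.meet_le_right _ _)) ?_
  rcases T.pred_chain z (T.meet z b) a (T.meet_le_left _ _) haz with h | h
  · exact T.le_meet _ _ _ h (T.meet_le_right _ _)
  · exact absurd (T.tle_trans _ _ _ h (T.meet_le_right z b)) hab

lemma meet_tle_of_tle_of_not_lin {a b v : β} (hvb : T.tle v b) (hva : ¬ T.lin v a) :
    T.tle (T.meet a b) v :=
  (T.pred_chain b v (T.meet a b) hvb (T.meet_le_right a b)).resolve_left fun h =>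
    hva (T.tle_lin _ _ (T.tle_trans _ _ _ h (T.meet_le_left a b)))

lemma lin_of_forall_leaf_lin {a b y : β} (hab : ¬ T.tle a b) (hba : ¬ T.tle b a)
    (hlin : T.lin a b)
    (hy : ∀ z, T.Leaf z → linLt T z b → T.meet a b = T.meet z b → T.lin z y) :
    T.lin a y := by
  obtain ⟨z, hz, haz⟩ := T.exists_leaf_tle a
  have hzb : T.lin z b := (T.lex_coh a b z b haz (T.tle_refl b) hab hba).mpr hlin
  have hzb' : z ≠ b := fun h => hab (h ▸ haz)
  exact T.lin_trans _ _ _ (T.tle_lin _ _ haz)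
    (hy z hz ⟨hzb, hzb'⟩ (T.meet_eq_meet_of_tle haz hab))

lemma tle_of_linLt_of_lin_nextLeaf {x x' v : β} (hx' : T.Leaf x')
    (hnext : ∀ z, T.Leaf z → linLt T x z → T.lin x' z) (hxv : linLt T x v)
    (hvx' : T.lin v x') : T.tle v x' := by
  by_contra hn
  have hnx'v : ¬ T.tle x' v := fun h => hn (hx' v h ▸ T.tle_refl v)
  obtain ⟨z, hz, hvz⟩ := T.exists_leaf_tle v
  have hzx' : T.lin z x' := (T.lex_coh v x' z x' hvz (T.tle_refl x') hn hnx'v).mpr hvx'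
  have hxz : linLt T x z := by
    refine ⟨T.lin_trans _ _ _ hxv.1 (T.tle_lin _ _ hvz), fun h => hxv.2 ?_⟩
    exact T.lin_antisymm _ _ hxv.1 (h ▸ T.tle_lin _ _ hvz)
  exact hn (T.lin_antisymm _ _ hzx' (hnext z hz hxz) ▸ hvz)

end OTree

lemma IsMorphism.tle {S : OTree α} {T : OTree β} {e : α → β} (he : IsMorphism S T e)
    {a b : α} (h : S.tle a b) : T.tle (e a) (e b) := by
  rw [OTree.tle_iff_meet_eq] at h ⊢
  rw [← he.1, h]

namespace IsInjectionOf

variable {S : OTree α} {T : OTree β} {f : β → α} {i : α → β}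

lemma injective (hf : IsInjectionOf T S f i) : Function.Injective i :=
  Function.LeftInverse.injective hf.2.1

lemma tle_iff (hf : IsInjectionOf T S f i) {a b : α} : T.tle (i a) (i b) ↔ S.tle a b := by
  refine ⟨fun h => ?_, hf.1.tle⟩
  rw [OTree.tle_iff_meet_eq] at h ⊢
  exact hf.injective (by rw [hf.1.1, h])

lemma restrict (hf : IsInjectionOf T S f i) {T' : Set β} {S' : Set α} (hT : T'.Nonempty)
    (hTdc : ∀ v w, T.tle v w → w ∈ T' → v ∈ T') (hS : S'.Nonempty)
    (hSdc : ∀ v w, S.tle v w → w ∈ S' → v ∈ S') (hf' : Set.MapsTo f T' S')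
    (hi : Set.MapsTo i S' T') :
    IsInjectionOf (T.restrict T' hT hTdc) (S.restrict S' hS hSdc) hf'.restrict hi.restrict :=
  ⟨⟨fun v w => Subtype.ext (hf.1.1 v w), fun v w => hf.1.2.1 v w, Subtype.ext hf.1.2.2⟩,
    fun v => Subtype.ext (hf.2.1 v), fun w => hf.2.2 w⟩

end IsInjectionOf

namespace Conj

variable {S : OTree α} {T : OTree β} {f : β → α} {i : α → β} {x : α} {y : β}

lemma lin_of_image_lin (hf : IsInjectionOf T S f i) (hy : T.Leaf y) {x' v : α}
    (hx' : S.Leaf x') (hnext : ∀ z, S.Leaf z → linLt S x z → S.lin x' z)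
    (hyx' : linLt T y (i x')) (hmeet : T.meet (i x) (i x') = T.meet y (i x'))
    (hv : T.lin (i v) y) : S.lin v x := by
  by_contra hvx
  have hxv : linLt S x v := ⟨(S.lin_total v x).resolve_left hvx, fun h => hvx (h ▸ S.lin_refl x)⟩
  have hx'y : ¬ T.lin (i x') y := fun h => hyx'.2 (T.lin_antisymm _ _ hyx'.1 h)
  by_cases hx'v : S.lin x' v
  · exact hx'y (T.lin_trans _ _ _ (hf.1.2.1 _ _ hx'v) hv)
  have hvx' : S.tle v x' :=
    S.tle_of_linLt_of_lin_nextLeaf hx' hnext hxv ((S.lin_total v x').resolve_right hx'v)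
  have hmv : S.tle (S.meet x x') v := S.meet_tle_of_tle_of_not_lin hvx' hvx
  have hyv : ¬ T.tle y (i v) := fun h =>
    hyx'.2 (hy _ (hy _ h ▸ hf.1.tle hvx')).symm
  have hvy : ¬ T.tle (i v) y := by
    intro h
    have h' : T.tle (i v) (i (S.meet x x')) := by
      rw [hf.1.1, hmeet]
      exact T.le_meet _ _ _ h (hf.1.tle hvx')
    exact hvx (S.tle_lin _ _ (S.tle_antisymm _ _ hmv (hf.tle_iff.mp h') ▸ S.meet_le_left x x'))
  exact hx'y ((T.lex_coh (i v) y (i x') y (hf.1.tle hvx') (T.tle_refl y) hvy hyv).mpr hv)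

theorem lin_iff (hf : IsInjectionOf T S f i) (hc : Conj S T i x y) (v : α) :
    S.lin v x ↔ T.lin (i v) y := by
  obtain ⟨hx, hy, ⟨hxmax, hymax⟩ | ⟨x', hx', hxx', hnext, hyx', hmeet, hprev⟩⟩ := hc
  · constructor <;> intro
    · obtain ⟨z, hz, hvz⟩ := T.exists_leaf_tle (i v)
      exact T.lin_trans _ _ _ (T.tle_lin _ _ hvz) (hymax z hz)
    · obtain ⟨z, hz, hvz⟩ := S.exists_leaf_tle v
      exact S.lin_trans _ _ _ (S.tle_lin _ _ hvz) (hxmax z hz)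
  · have hxx'_tle : ¬ S.tle x x' := fun h => hxx'.2 (hx x' h).symm
    have hx'x_tle : ¬ S.tle x' x := fun h => hxx'.2 (S.lin_antisymm _ _ hxx'.1 (S.tle_lin _ _ h))
    have hixy : T.lin (i x) y :=
      T.lin_of_forall_leaf_lin (mt hf.tle_iff.mp hxx'_tle) (mt hf.tle_iff.mp hx'x_tle)
        (hf.1.2.1 _ _ hxx'.1) hprev
    exact ⟨fun h => T.lin_trans _ _ _ (hf.1.2.1 _ _ h) hixy,
      lin_of_image_lin hf hy hx' hnext hyx' hmeet⟩

end Conj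

/-- If `y` is `f`-conjugate to `x`, then `f[T^y] = S^x` and `f_x = f ↾ T^y` is a
rigid surjection from `T^y` onto `S^x`. -/
theorem stmt11 (S : OTree α) (T : OTree β) (f : β → α) (i : α → β)
    (hf : IsInjectionOf T S f i) (x : α) (y : β) (hc : Conj S T i x y) :
    f '' (T.initSeg y) = S.initSeg x ∧
    ∃ hm : Set.MapsTo f (T.initSeg y) (S.initSeg x),
      IsRigidSurj (T.init y) (S.init x) (Set.MapsTo.restrict _ _ _ hm) := by
  have hi : Set.MapsTo i (S.initSeg x) (T.initSeg y) := fun v hv => (hc.lin_iff hf v).mp hv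
  have hm : Set.MapsTo f (T.initSeg y) (S.initSeg x) := fun w hw =>
    (hc.lin_iff hf (f w)).mpr (T.lin_trans _ _ _ (T.tle_lin _ _ (hf.2.2 w)) hw)
  exact ⟨hm.image_subset.antisymm fun v hv => ⟨i v, hi hv, hf.2.1 v⟩, hm, hi.restrict,
    hf.restrict _ _ _ _ hm hi⟩
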